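/- Let e_ξ = (Jξ_x, Jξ_y, Jξ_z) ∈ ℝ³ be arbitrary, and define the curvilinear flux F_ξ(Q) and non-conservative term B_ξ(D) from e_ξ as in the split form of the elastic wave equation (F_ξ places E_{e_ξ}·σ in the velocity slots; B_ξ places the e_ξ-symmetrized entries of D in the stress slots). Then for all Q ∈ ℝ⁹ and all D ∈ ℝ⁹: Dᵀ F_ξ(Q) − Qᵀ B_ξ(D) = 0. In particular the anti-symmetric structure of Lemma 2.1 is preserved under any smooth curvilinear coordinate transformation. -/

import Mathlib

open Matrix

/-!
Write `Q = (v, σ)` with `σ` the symmetric stress tensor. The flux places the traction `σ e` in the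
velocity slots, so `Dᵀ F_ξ(Q) = v_D · σ e`. The non-conservative term pairs each `σ_ij` with
`e_i D_j + e_j D_i`, once for `i ≠ j` and with half weight on the diagonal; because `σ` is
symmetric this is the same bilinear form `v_D · σ e`, whatever `e` is.
-/

/-- Curvilinear flux F_ξ(Q) built from an arbitrary basis vector
e = (Jξ_x, Jξ_y, Jξ_z), with Q = (v, σ) ordered as
(v_x, v_y, v_z, σ_xx, σ_yy, σ_zz, σ_xy, σ_xz, σ_yz). -/
def curvFlux (e : Fin 3 → ℝ) (Q : Fin 9 → ℝ) : Fin 9 → ℝ :=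
  ![e 0 * Q 3 + e 1 * Q 6 + e 2 * Q 7,
    e 0 * Q 6 + e 1 * Q 4 + e 2 * Q 8,
    e 0 * Q 7 + e 1 * Q 8 + e 2 * Q 5,
    0, 0, 0, 0, 0, 0]

/-- Curvilinear non-conservative term B_ξ(D) built from the same e. -/
def curvB (e : Fin 3 → ℝ) (D : Fin 9 → ℝ) : Fin 9 → ℝ :=
  ![0, 0, 0,
    e 0 * D 0,
    e 1 * D 1,
    e 2 * D 2,
    e 1 * D 0 + e 0 * D 1,
    e 2 * D 0 + e 0 * D 2,
    e 2 * D 1 + e 1 * D 2]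

def velocity (Q : Fin 9 → ℝ) : Fin 3 → ℝ :=
  ![Q 0, Q 1, Q 2]

def stressTensor (Q : Fin 9 → ℝ) : Matrix (Fin 3) (Fin 3) ℝ :=
  !![Q 3, Q 6, Q 7;
     Q 6, Q 4, Q 8;
     Q 7, Q 8, Q 5]

lemma dotProduct_curvFlux (e : Fin 3 → ℝ) (Q D : Fin 9 → ℝ) :
    D ⬝ᵥ curvFlux e Q = velocity D ⬝ᵥ (stressTensor Q *ᵥ e) := by
  simp only [dotProduct, mulVec, Fin.sum_univ_succ, Fin.sum_univ_zero, curvFlux, velocity,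
    stressTensor, of_apply, cons_val', cons_val, Fin.succ_zero_eq_one, Fin.succ_one_eq_two,
    Fin.reduceSucc]
  ring

lemma dotProduct_curvB (e : Fin 3 → ℝ) (Q D : Fin 9 → ℝ) :
    Q ⬝ᵥ curvB e D = velocity D ⬝ᵥ (stressTensor Q *ᵥ e) := by
  simp only [dotProduct, mulVec, Fin.sum_univ_succ, Fin.sum_univ_zero, curvB, velocity,
    stressTensor, of_apply, cons_val', cons_val, Fin.succ_zero_eq_one, Fin.succ_one_eq_two,
    Fin.reduceSucc]
  ring

/-- The anti-symmetric structure is preserved under any curvilinear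
coordinate transformation: for every e_ξ = (Jξ_x, Jξ_y, Jξ_z) and all Q, D,
Dᵀ F_ξ(Q) − Qᵀ B_ξ(D) = 0. -/
theorem curvilinear_antisymmetric (e : Fin 3 → ℝ) :
    ∀ Q D : Fin 9 → ℝ, D ⬝ᵥ curvFlux e Q - Q ⬝ᵥ curvB e D = 0 := by
  intro Q D
  rw [dotProduct_curvFlux, dotProduct_curvB, sub_self]
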